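/- Fix i ∈ {1,…,n} and 1 ≤ k ≤ p. If x ∈ ℝ^d satisfies x_{(i−1)p+j} = 0 for all j with k ≤ j ≤ p, then the gradient g = ∇f_i(x) = ((L−μ)/4)(A_i x − e_{(i−1)p+1}) + μx satisfies g_{(i−1)p+j} = 0 for all j with k+1 ≤ j ≤ p; moreover, at every coordinate outside the i-th block of p coordinates, g equals μx, so g vanishes wherever x vanishes outside block i. -/

import Mathlib

/-!
`f_i` is the quadratic `c ((1/2)⟪x, A_i x⟫ - ⟪e, x⟫) + (μ/2)‖x‖²` with `A_i` symmetric, so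
`∇f_i(x) = c (A_i x - e) + μ x`. Since `A_i` vanishes outside block `i` and is tridiagonal there,
row `j` of `A_i x` only involves `x` at positions `j - 1, j, j + 1` of block `i`, and `e` sits at
position `0` of block `i`; the zero pattern of `x` therefore advances by at most one coordinate.
-/

open Finset
open scoped RealInnerProductSpace

/-- The `p × p` tridiagonal matrix with diagonal entries `2` except the last one, which is `ξ`,
and `-1` on the sub- and super-diagonal. -/
noncomputable def Tmat (p : ℕ) (ξ : ℝ) : Matrix (Fin p) (Fin p) ℝ :=
  fun j k =>
    if j = k then (if (j : ℕ) = p - 1 then ξ else 2)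
    else if (j : ℕ) + 1 = (k : ℕ) ∨ (k : ℕ) + 1 = (j : ℕ) then -1 else 0

/-- The `d × d` matrix (`d = np`, coordinates indexed by `Fin n × Fin p`) which is zero outside
the `i`-th diagonal `p × p` block, and whose `i`-th diagonal block is `Tmat p ξ`. -/
noncomputable def Amat (n p : ℕ) (ξ : ℝ) (i : Fin n) :
    Matrix (Fin n × Fin p) (Fin n × Fin p) ℝ :=
  fun a b => if a.1 = i ∧ b.1 = i then Tmat p ξ a.2 b.2 else 0

/-- The component function
`f_i(x) = ((L−μ)/4) ((1/2)⟨x, A_i x⟩ − ⟨e_{(i−1)p+1}, x⟩) + (μ/2)‖x‖²`. -/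
noncomputable def fComp1 (n p : ℕ) [NeZero p] (L μ ξ : ℝ) (i : Fin n)
    (x : EuclideanSpace ℝ (Fin n × Fin p)) : ℝ :=
  ((L - μ) / 4) *
      ((1 / 2) * (∑ a : Fin n × Fin p, ∑ b : Fin n × Fin p, x a * Amat n p ξ i a b * x b)
        - x (i, 0)) +
    (μ / 2) * ‖x‖ ^ 2

theorem hasGradientAt_quadratic {E : Type*} [NormedAddCommGroup E] [InnerProductSpace ℝ E]
    [CompleteSpace E] {T : E →L[ℝ] E} (hT : (T : E →ₗ[ℝ] E).IsSymmetric) (c μ : ℝ) (e x : E) :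
    HasGradientAt (fun y => c * ((1 / 2) * ⟪y, T y⟫ - ⟪e, y⟫) + (μ / 2) * ‖y‖ ^ 2)
      (c • (T x - e) + μ • x) x := by
  rw [hasGradientAt_iff_hasFDerivAt]
  have hquad := (hasFDerivAt_id x).inner ℝ T.hasFDerivAt
  have hlin := (innerSL ℝ e).hasFDerivAt (x := x)
  have hnorm := (hasStrictFDerivAt_norm_sq x).hasFDerivAt
  refine ((((hquad.const_mul (1 / 2)).sub hlin).const_mul c).add
    (hnorm.const_mul (μ / 2))).congr_fderiv ?_
  ext v
  have hsymm : ⟪x, T v⟫ = ⟪T x, v⟫ := (hT x v).symm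
  simp [hsymm, real_inner_comm (T x) v]
  ring

lemma Tmat_isSymm (p : ℕ) (ξ : ℝ) : (Tmat p ξ).IsSymm := by
  refine Matrix.IsSymm.ext fun j k => ?_
  unfold Tmat
  rcases eq_or_ne j k with rfl | h
  · rfl
  · rw [if_neg h, if_neg (Ne.symm h)]
    exact if_congr or_comm rfl rfl

lemma Amat_isSymm (n p : ℕ) (ξ : ℝ) (i : Fin n) : (Amat n p ξ i).IsSymm :=
  Matrix.IsSymm.ext fun _ _ => if_congr and_comm ((Tmat_isSymm p ξ).apply _ _) rfl

lemma fComp1_eq (n p : ℕ) [NeZero p] (L μ ξ : ℝ) (i : Fin n) :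
    fComp1 n p L μ ξ i = fun y => ((L - μ) / 4) * ((1 / 2) *
      ⟪y, Matrix.toEuclideanCLM (𝕜 := ℝ) (Amat n p ξ i) y⟫ - ⟪EuclideanSpace.single (i, 0) 1, y⟫)
        + (μ / 2) * ‖y‖ ^ 2 := by
  funext y
  simp [fComp1, Matrix.inner_toEuclideanCLM, dotProduct, Matrix.mulVec, Finset.mul_sum, mul_assoc,
    EuclideanSpace.inner_single_left]

lemma gradient_fComp1_apply (n p : ℕ) [NeZero p] (L μ ξ : ℝ) (i : Fin n)
    (x : EuclideanSpace ℝ (Fin n × Fin p)) (a : Fin n × Fin p) :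
    gradient (fComp1 n p L μ ξ i) x a =
      ((L - μ) / 4) * ((∑ b, Amat n p ξ i a b * x b) - (if a = (i, 0) then 1 else 0))
        + μ * x a := by
  have hsymm : (Matrix.toEuclideanCLM (𝕜 := ℝ) (Amat n p ξ i) :
      EuclideanSpace ℝ (Fin n × Fin p) →ₗ[ℝ] _).IsSymmetric :=
    Matrix.isSymmetric_toEuclideanLin_iff.mpr
      (Matrix.isHermitian_iff_isSymm.mpr (Amat_isSymm n p ξ i))
  rw [fComp1_eq, (hasGradientAt_quadratic hsymm _ μ _ x).gradient]
  simp [Matrix.mulVec, dotProduct]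

lemma Tmat_eq_zero_of_add_one_lt {p : ℕ} (ξ : ℝ) {j j' : Fin p} (h : (j' : ℕ) + 1 < j) :
    Tmat p ξ j j' = 0 := by
  unfold Tmat
  rw [if_neg (by omega), if_neg (by omega)]

lemma Amat_eq_zero_of_fst_ne {n p : ℕ} (ξ : ℝ) {i : Fin n} {a : Fin n × Fin p} (ha : a.1 ≠ i)
    (b : Fin n × Fin p) : Amat n p ξ i a b = 0 :=
  if_neg fun h => ha h.1

lemma sum_Amat_mul_eq_zero {n p : ℕ} (ξ : ℝ) (i : Fin n) {k : ℕ}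
    {x : EuclideanSpace ℝ (Fin n × Fin p)} (hx : ∀ j : Fin p, k ≤ (j : ℕ) + 1 → x (i, j) = 0)
    {j : Fin p} (hj : k ≤ j) : ∑ b, Amat n p ξ i (i, j) b * x b = 0 := by
  refine Finset.sum_eq_zero fun ⟨i', j'⟩ _ => ?_
  by_cases hi' : i' = i
  · subst hi'
    by_cases hj' : k ≤ (j' : ℕ) + 1
    · rw [hx j' hj', mul_zero]
    · simp [Amat, Tmat_eq_zero_of_add_one_lt ξ (show (j' : ℕ) + 1 < j by omega)]
  · simp [Amat, hi']

theorem stmt14_general (n p : ℕ) [NeZero p] (L μ ξ : ℝ) (i : Fin n) (k : ℕ) (hk1 : 1 ≤ k)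
    (x : EuclideanSpace ℝ (Fin n × Fin p))
    (hx : ∀ j : Fin p, k ≤ (j : ℕ) + 1 → x (i, j) = 0) :
    (∀ a : Fin n × Fin p,
        gradient (fComp1 n p L μ ξ i) x a =
          ((L - μ) / 4) *
              ((∑ b : Fin n × Fin p, Amat n p ξ i a b * x b)
                - (if a = ((i, 0) : Fin n × Fin p) then 1 else 0)) +
            μ * x a) ∧
    (∀ j : Fin p, k + 1 ≤ (j : ℕ) + 1 → gradient (fComp1 n p L μ ξ i) x (i, j) = 0) ∧
    (∀ a : Fin n × Fin p, a.1 ≠ i → gradient (fComp1 n p L μ ξ i) x a = μ * x a) := by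
  have hgrad := gradient_fComp1_apply n p L μ ξ i x
  refine ⟨hgrad, fun j hj => ?_, fun a ha => ?_⟩
  · have hj0 : ((i, j) : Fin n × Fin p) ≠ (i, 0) := by
      simp only [ne_eq, Prod.mk.injEq, true_and, Fin.ext_iff, Fin.val_zero]
      omega
    rw [hgrad, sum_Amat_mul_eq_zero ξ i hx (by omega), if_neg hj0, hx j (by omega)]
    ring
  · have ha0 : a ≠ (i, 0) := by rintro rfl; exact ha rfl
    rw [hgrad, Finset.sum_eq_zero fun b _ => by rw [Amat_eq_zero_of_fst_ne ξ ha, zero_mul],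
      if_neg ha0]
    ring

/-- Zero-chain property of the Case (1) hard instance: the gradient of `f_i` at `x` equals
`((L−μ)/4)(A_i x − e_{(i−1)p+1}) + μ x` coordinatewise; if the coordinates `k, …, p` of
block `i` of `x` vanish, then the coordinates `k+1, …, p` of block `i` of `∇f_i(x)`
vanish; and outside block `i` the gradient equals `μ x` coordinatewise. -/
theorem stmt14 (n p : ℕ) (hn : 2 ≤ n) [NeZero p] (hp : 1 ≤ p)
    (L μ κ ξ : ℝ) (hμ : 0 < μ) (hLμ : μ < L) (hκ : κ = L / μ)
    (hξ : ξ = (Real.sqrt ((κ - 1) / n + 1) + 3) / (Real.sqrt ((κ - 1) / n + 1) + 1))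
    (i : Fin n) (k : ℕ) (hk1 : 1 ≤ k) (hkp : k ≤ p)
    (x : EuclideanSpace ℝ (Fin n × Fin p))
    (hx : ∀ j : Fin p, k ≤ (j : ℕ) + 1 → x (i, j) = 0) :
    (∀ a : Fin n × Fin p,
        gradient (fComp1 n p L μ ξ i) x a =
          ((L - μ) / 4) *
              ((∑ b : Fin n × Fin p, Amat n p ξ i a b * x b)
                - (if a = ((i, 0) : Fin n × Fin p) then 1 else 0)) +
            μ * x a) ∧
    (∀ j : Fin p, k + 1 ≤ (j : ℕ) + 1 → gradient (fComp1 n p L μ ξ i) x (i, j) = 0) ∧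
    (∀ a : Fin n × Fin p, a.1 ≠ i → gradient (fComp1 n p L μ ξ i) x a = μ * x a) :=
  stmt14_general n p L μ ξ i k hk1 x hx
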